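/- arXiv:2602.11857 — 8 statements merged into one kernel-verified Lean document; each statement's English description precedes it below -/
import Mathlib

section
/- Let A be an m×n real matrix and let A_diff denote the gap max_{i,j} A_{ij} − min_{i,j} A_{ij}. Then for any two probability vectors y, y' in the n-simplex, ‖A(y − y')‖_∞ ≤ (A_diff/2)·‖y − y'‖_1. -/
/-- For a real m×n matrix `A` with entry range `Adiff = max A - min A`,
and probability vectors `y, y'` in the n-simplex,
`‖A (y - y')‖_∞ ≤ (Adiff / 2) * ‖y - y'‖_1`. -/
theorem stmt_0 (m n : ℕ) (A : Matrix (Fin m) (Fin n) ℝ)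
    (Amax Amin : ℝ)
    (hAmax : IsGreatest {x : ℝ | ∃ i j, A i j = x} Amax)
    (hAmin : IsLeast {x : ℝ | ∃ i j, A i j = x} Amin)
    (y y' : Fin n → ℝ)
    (hy : (∀ j, 0 ≤ y j) ∧ ∑ j, y j = 1)
    (hy' : (∀ j, 0 ≤ y' j) ∧ ∑ j, y' j = 1) :
    ∀ i : Fin m, |∑ j, A i j * (y j - y' j)| ≤ (Amax - Amin) / 2 * ∑ j, |y j - y' j| := by
  intro i
  set c : ℝ := (Amax + Amin) / 2 with hc
  have hsum0 : ∑ j, (y j - y' j) = 0 := by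
    rw [Finset.sum_sub_distrib, hy.2, hy'.2]; ring
  have key : ∑ j, A i j * (y j - y' j) = ∑ j, (A i j - c) * (y j - y' j) := by
    simp only [sub_mul, Finset.sum_sub_distrib, ← Finset.mul_sum, hsum0, mul_zero, sub_zero]
  rw [key]
  calc |∑ j, (A i j - c) * (y j - y' j)|
      ≤ ∑ j, |(A i j - c) * (y j - y' j)| := Finset.abs_sum_le_sum_abs _ _
    _ ≤ ∑ j, (Amax - Amin) / 2 * |y j - y' j| := by
        apply Finset.sum_le_sum
        intro j _
        rw [abs_mul]
        apply mul_le_mul_of_nonneg_right _ (abs_nonneg _)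
        have h1 : A i j ≤ Amax := hAmax.2 ⟨i, j, rfl⟩
        have h2 : Amin ≤ A i j := hAmin.2 ⟨i, j, rfl⟩
        rw [abs_le]
        constructor <;> [skip; skip] <;> simp only [hc] <;> linarith
    _ = (Amax - Amin) / 2 * ∑ j, |y j - y' j| := by rw [Finset.mul_sum]
end

section
/- Let A be an m×n real matrix and A_diff = max_{i,j} A_{ij} − min_{i,j} A_{ij}. Then for any two probability vectors x, x' in the m-simplex, ‖Aᵀ(x − x')‖_∞ ≤ (A_diff/2)·‖x − x'‖_1. -/
/-- For a real m×n matrix `A` with entry range `Adiff = max A - min A`,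
and probability vectors `x, x'` in the m-simplex,
`‖Aᵀ (x - x')‖_∞ ≤ (Adiff / 2) * ‖x - x'‖_1`. -/
theorem stmt_1 (m n : ℕ) (A : Matrix (Fin m) (Fin n) ℝ)
    (Amax Amin : ℝ)
    (hAmax : IsGreatest {v : ℝ | ∃ i j, A i j = v} Amax)
    (hAmin : IsLeast {v : ℝ | ∃ i j, A i j = v} Amin)
    (x x' : Fin m → ℝ)
    (hx : (∀ i, 0 ≤ x i) ∧ ∑ i, x i = 1)
    (hx' : (∀ i, 0 ≤ x' i) ∧ ∑ i, x' i = 1) :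
    ∀ j : Fin n, |∑ i, A i j * (x i - x' i)| ≤ (Amax - Amin) / 2 * ∑ i, |x i - x' i| := by
  intro j
  set c := (Amax + Amin) / 2 with hc
  have hsum : ∑ i, (x i - x' i) = 0 := by
    rw [Finset.sum_sub_distrib, hx.2, hx'.2]; ring
  have key : ∑ i, A i j * (x i - x' i) = ∑ i, (A i j - c) * (x i - x' i) := by
    rw [show (∑ i, (A i j - c) * (x i - x' i))
        = ∑ i, (A i j * (x i - x' i) - c * (x i - x' i)) by
      apply Finset.sum_congr rfl; intros; ring]
    rw [Finset.sum_sub_distrib, ← Finset.mul_sum, hsum]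
    ring
  rw [key]
  calc |∑ i, (A i j - c) * (x i - x' i)| ≤ ∑ i, |(A i j - c) * (x i - x' i)| :=
        Finset.abs_sum_le_sum_abs _ _
    _ ≤ ∑ i, (Amax - Amin) / 2 * |x i - x' i| := by
        apply Finset.sum_le_sum
        intro i _
        rw [abs_mul]
        apply mul_le_mul_of_nonneg_right _ (abs_nonneg _)
        have h1 : A i j ≤ Amax := hAmax.2 ⟨i, j, rfl⟩
        have h2 : Amin ≤ A i j := hAmin.2 ⟨i, j, rfl⟩
        rw [abs_le]
        constructor <;> [linarith; linarith]
    _ = (Amax - Amin) / 2 * ∑ i, |x i - x' i| := by rw [Finset.mul_sum]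
end

section
/- Let c ≥ 2 and let Δ_1, …, Δ_T be nonnegative reals. Define η_t = c / √(Σ_{s=1}^{t−1} Δ_s²) (with η_t = +∞ when the denominator is 0). Then Σ_{t=1}^T min{2Δ_t, η_t Δ_t²} ≤ 2√2 · c · √(Σ_{t=1}^T Δ_t²). -/
set_option maxHeartbeats 1000000 in
lemma core_ineq (c d a b : ℝ) (hc : 2 ≤ c) (hd : 0 < d) (ha : 0 < a) (hb : 0 < b)
    (hab : b ^ 2 = a ^ 2 + d ^ 2) :
    min (2 * d) (c / a * d ^ 2) ≤ 2 * Real.sqrt 2 * c * (b - a) := by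
  have hs2 : (1:ℝ) ≤ Real.sqrt 2 := by
    rw [show (1:ℝ) = Real.sqrt 1 by simp]
    exact Real.sqrt_le_sqrt (by norm_num)
  have h2 : (Real.sqrt 2) ^ 2 = 2 := Real.sq_sqrt (by norm_num)
  have hrr : (Real.sqrt 2 * c * d ^ 2) ^ 2 = 2 * (c * d ^ 2) ^ 2 := by
    rw [mul_pow, mul_pow, h2]; ring
  have hba : a ≤ b := by nlinarith [sq_nonneg d]
  -- step 1: min ≤ √2 * c * d² / b
  have hmin : min (2 * d) (c / a * d ^ 2) ≤ Real.sqrt 2 * c * d ^ 2 / b := by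
    have hrhs : 0 ≤ Real.sqrt 2 * c * d ^ 2 / b := by positivity
    have hsq : (min (2 * d) (c / a * d ^ 2)) ^ 2 ≤ (Real.sqrt 2 * c * d ^ 2 / b) ^ 2 := by
      rcases le_total (2 * d) (c / a * d ^ 2) with hle | hle
      · rw [min_eq_left hle]
        have hmulA := mul_le_mul_of_nonneg_right hle ha.le
        have hA : 2 * d * a ≤ c * d ^ 2 := by
          have : c / a * d ^ 2 * a = c * d ^ 2 := by field_simp
          linarith [hmulA, this.ge, this.le]
        have h1 : 2 * a ≤ c * d := by nlinarith [hA, hd]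
        have h1sq : (2 * a) ^ 2 ≤ (c * d) ^ 2 :=
          pow_le_pow_left₀ (by positivity) h1 2
        have hc2 : (4:ℝ) ≤ c ^ 2 := by nlinarith
        have e1 := mul_le_mul_of_nonneg_right h1sq (sq_nonneg d)
        have e2 := mul_le_mul_of_nonneg_right hc2 (sq_nonneg (d ^ 2))
        rw [div_pow, le_div_iff₀ (by positivity : (0:ℝ) < b ^ 2), hrr]
        nlinarith [e1, e2, hab]
      · rw [min_eq_right hle]
        have hmulA := mul_le_mul_of_nonneg_right hle ha.le
        have hA : c * d ^ 2 ≤ 2 * d * a := by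
          have : c / a * d ^ 2 * a = c * d ^ 2 := by field_simp
          linarith [hmulA, this.ge, this.le]
        have h1 : c * d ≤ 2 * a := by nlinarith [hA, hd]
        have hda : d ≤ a := by nlinarith [h1, hc, hd]
        have hda2 : d ^ 2 ≤ a ^ 2 := pow_le_pow_left₀ hd.le hda 2
        have e1 := mul_le_mul_of_nonneg_left hda2 (sq_nonneg (c * d ^ 2))
        rw [div_mul_eq_mul_div, div_pow, div_pow,
          div_le_div_iff₀ (by positivity) (by positivity), hrr]
        nlinarith [e1, hab]
    have hminn : 0 ≤ min (2 * d) (c / a * d ^ 2) :=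
      le_min (by positivity) (by positivity)
    exact (pow_le_pow_iff_left₀ hminn hrhs two_ne_zero).mp hsq
  -- step 2: √2 c d² / b ≤ 2√2 c (b - a)
  have hstep2 : Real.sqrt 2 * c * d ^ 2 / b ≤ 2 * Real.sqrt 2 * c * (b - a) := by
    have hba' : (b - a) * (b + a) = d ^ 2 := by nlinarith [hab]
    have h3 : d ^ 2 ≤ 2 * (b - a) * b := by nlinarith [hba', hba]
    have hcpos : (0:ℝ) ≤ Real.sqrt 2 * c := by positivity
    have h4 : Real.sqrt 2 * c * d ^ 2 ≤ 2 * Real.sqrt 2 * c * (b - a) * b := by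
      nlinarith [mul_le_mul_of_nonneg_left h3 hcpos]
    exact (div_le_iff₀ hb).mpr h4
  linarith

lemma key_step (c d S : ℝ) (hc : 2 ≤ c) (hd : 0 ≤ d) (hS : 0 ≤ S) :
    (if S = 0 then 2 * d else min (2 * d) (c / Real.sqrt S * d ^ 2))
      ≤ 2 * Real.sqrt 2 * c * (Real.sqrt (S + d ^ 2) - Real.sqrt S) := by
  have hs2 : (1:ℝ) ≤ Real.sqrt 2 := by
    rw [show (1:ℝ) = Real.sqrt 1 by simp]
    exact Real.sqrt_le_sqrt (by norm_num)
  by_cases h0 : S = 0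
  · simp [h0, Real.sqrt_sq hd]
    have h24 : (2:ℝ) ≤ 2 * Real.sqrt 2 * c := by nlinarith [hs2, hc]
    nlinarith [mul_le_mul_of_nonneg_right h24 hd]
  · rw [if_neg h0]
    have hSpos : 0 < S := lt_of_le_of_ne hS (Ne.symm h0)
    rcases eq_or_lt_of_le hd with hdz | hdpos
    · simp [← hdz]
    exact core_ineq c d (Real.sqrt S) (Real.sqrt (S + d ^ 2)) hc hdpos
      (Real.sqrt_pos.mpr hSpos) (Real.sqrt_pos.mpr (by positivity))
      (by rw [Real.sq_sqrt (by positivity), Real.sq_sqrt hS])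

/-- Stability term bound for optimistic Hedge with AdaHedge-type learning rate:
with `η t = c / √(Σ_{s<t} Δ s ^ 2)` (interpreted as `+∞`, i.e. the `min` equals `2 Δ t`,
when the denominator vanishes), `Σ_{t=1}^T min {2 Δ t, η t * Δ t ^ 2} ≤ 2√2 c √(Σ_t Δ t ^ 2)`. -/
theorem stmt_4 (T : ℕ) (c : ℝ) (hc : 2 ≤ c) (Δ : ℕ → ℝ) (hΔ : ∀ t, 0 ≤ Δ t) :
    ∑ t ∈ Finset.Icc 1 T,
      (if (∑ s ∈ Finset.Icc 1 (t - 1), Δ s ^ 2) = 0 then 2 * Δ t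
       else min (2 * Δ t) (c / Real.sqrt (∑ s ∈ Finset.Icc 1 (t - 1), Δ s ^ 2) * Δ t ^ 2))
      ≤ 2 * Real.sqrt 2 * c * Real.sqrt (∑ t ∈ Finset.Icc 1 T, Δ t ^ 2) := by
  induction T with
  | zero => simp
  | succ n ih =>
    rw [Finset.sum_Icc_succ_top (by omega), Finset.sum_Icc_succ_top (by omega)]
    have hkey := key_step c (Δ (n + 1)) (∑ s ∈ Finset.Icc 1 n, Δ s ^ 2) hc (hΔ _)
      (Finset.sum_nonneg fun i _ => sq_nonneg _)
    simp only [Nat.add_sub_cancel]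
    calc _ ≤ 2 * Real.sqrt 2 * c * Real.sqrt (∑ t ∈ Finset.Icc 1 n, Δ t ^ 2)
          + 2 * Real.sqrt 2 * c *
            (Real.sqrt ((∑ s ∈ Finset.Icc 1 n, Δ s ^ 2) + Δ (n + 1) ^ 2)
              - Real.sqrt (∑ s ∈ Finset.Icc 1 n, Δ s ^ 2)) := by
          exact add_le_add ih hkey
      _ = _ := by ring
end

section
/- Let z_1, …, z_T be points in the probability simplex Δ_d, with the convention z_0 = 0, so that consecutive differences satisfy ‖z_t − z_{t−1}‖_1² ≤ 4. Let P_t = Σ_{s=1}^{t−1} ‖z_s − z_{s−1}‖_1². Fix c_1, c_2 > 0 and suppose some t ∈ [T] satisfies P_t > c_2/c_1 + 4; let τ̂ be the least such t. Then τ̂ ≥ 2, P_{τ̂} ≤ c_2/c_1 + 8, P_{τ̂−1} ≥ c_2/c_1, and c_1·√(P_{τ̂}) + c_2/√(P_{τ̂−1}) ≤ √8·c_1 + 2·√(c_1 c_2). -/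
/-- Stopping-time tradeoff lemma for strategy path lengths. With
`P t = Σ_{s=1}^{t-1} ‖z s - z (s-1)‖_1²`, consecutive differences satisfying
`‖z t - z (t-1)‖_1² ≤ 4`, and `τ̂` the least `t ∈ [T]` with `P t > c₂/c₁ + 4`:
`τ̂ ≥ 2`, `P τ̂ ≤ c₂/c₁ + 8`, `P (τ̂-1) ≥ c₂/c₁`, and
`c₁ √(P τ̂) + c₂ / √(P (τ̂-1)) ≤ √8 c₁ + 2 √(c₁ c₂)`. -/
theorem stmt_8 (T d : ℕ) (hT : 1 ≤ T)
    (z : ℕ → Fin d → ℝ)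
    (hdiff : ∀ t, 1 ≤ t → t ≤ T → (∑ j, |z t j - z (t - 1) j|) ^ 2 ≤ 4)
    (P : ℕ → ℝ)
    (hP : ∀ t, P t = ∑ s ∈ Finset.Icc 1 (t - 1), (∑ j, |z s j - z (s - 1) j|) ^ 2)
    (c₁ c₂ : ℝ) (hc₁ : 0 < c₁) (hc₂ : 0 < c₂)
    (τ : ℕ)
    (hτ : IsLeast {t | t ∈ Finset.Icc 1 T ∧ P t > c₂ / c₁ + 4} τ) :
    2 ≤ τ ∧
    P τ ≤ c₂ / c₁ + 8 ∧
    c₂ / c₁ ≤ P (τ - 1) ∧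
    c₁ * Real.sqrt (P τ) + c₂ / Real.sqrt (P (τ - 1))
      ≤ Real.sqrt 8 * c₁ + 2 * Real.sqrt (c₁ * c₂) := by
  obtain ⟨⟨hmem, hgt⟩, hlb⟩ := hτ
  rw [Finset.mem_Icc] at hmem
  have hr : 0 < c₂ / c₁ := div_pos hc₂ hc₁
  have hτ2 : 2 ≤ τ := by
    by_contra h
    interval_cases τ
    · simp [hP] at hgt; linarith
    · simp [hP] at hgt; linarith
  -- P τ = P (τ-1) + diff (τ-1)
  have hsplit : P τ = P (τ - 1) + (∑ j, |z (τ-1) j - z (τ-1-1) j|) ^ 2 := by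
    rw [hP, hP]
    have h1 : τ - 1 = (τ - 1 - 1) + 1 := by omega
    rw [h1, Finset.sum_Icc_succ_top (by omega)]
    congr 2 <;> omega
  have hd4 : (∑ j, |z (τ-1) j - z (τ-1-1) j|) ^ 2 ≤ 4 :=
    hdiff (τ-1) (by omega) (by omega)
  have hnot : ¬ (P (τ-1) > c₂ / c₁ + 4) := fun h => by
    have := hlb (a := τ - 1) ⟨Finset.mem_Icc.mpr ⟨by omega, by omega⟩, h⟩
    omega
  push_neg at hnot
  refine ⟨hτ2, by linarith, by linarith, ?_⟩
  have hPτ1 : c₂ / c₁ ≤ P (τ - 1) := by linarith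
  have h1 : c₁ * Real.sqrt (P τ) ≤ c₁ * (Real.sqrt (c₂ / c₁) + Real.sqrt 8) := by
    refine mul_le_mul_of_nonneg_left ?_ hc₁.le
    calc Real.sqrt (P τ) ≤ Real.sqrt (c₂ / c₁ + 8) := Real.sqrt_le_sqrt (by linarith)
      _ ≤ Real.sqrt ((Real.sqrt (c₂ / c₁) + Real.sqrt 8) ^ 2) := by
          refine Real.sqrt_le_sqrt ?_
          nlinarith [Real.sq_sqrt hr.le, Real.sq_sqrt (by norm_num : (0:ℝ) ≤ 8),
            Real.sqrt_nonneg (c₂ / c₁), Real.sqrt_nonneg 8]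
      _ = Real.sqrt (c₂ / c₁) + Real.sqrt 8 := Real.sqrt_sq (by positivity)
  have hkey : c₁ * Real.sqrt (c₂ / c₁) = Real.sqrt (c₁ * c₂) := by
    rw [show c₁ * Real.sqrt (c₂ / c₁) = Real.sqrt (c₁ ^ 2) * Real.sqrt (c₂ / c₁) by
      rw [Real.sqrt_sq hc₁.le], ← Real.sqrt_mul (by positivity)]
    congr 1
    field_simp
  have h2 : c₂ / Real.sqrt (P (τ-1)) ≤ Real.sqrt (c₁ * c₂) := by
    have hs : Real.sqrt (c₂ / c₁) ≤ Real.sqrt (P (τ-1)) := Real.sqrt_le_sqrt hPτ1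
    have hpos : 0 < Real.sqrt (c₂ / c₁) := Real.sqrt_pos.mpr hr
    have : c₂ / Real.sqrt (P (τ-1)) ≤ c₂ / Real.sqrt (c₂ / c₁) :=
      div_le_div_of_nonneg_left hc₂.le hpos hs
    have heq : c₂ / Real.sqrt (c₂ / c₁) = Real.sqrt (c₁ * c₂) := by
      rw [show c₂ / Real.sqrt (c₂ / c₁) = Real.sqrt (c₂ ^ 2) / Real.sqrt (c₂ / c₁) by
        rw [Real.sqrt_sq hc₂.le], ← Real.sqrt_div (by positivity)]
      congr 1
      field_simp
    linarith [heq ▸ this]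
  rw [mul_add, hkey] at h1
  linarith
end

section
/- In a two-player zero-sum game with payoff matrix A ∈ ℝ^{m_x × m_y}, if the x-player plays strategies x_1,…,x_T ∈ Δ_{m_x} and the y-player plays y_1,…,y_T ∈ Δ_{m_y}, and the total regret is R = max_{x*∈Δ_{m_x}} Σ_t ⟨x* − x_t, A y_t⟩ + max_{y*∈Δ_{m_y}} Σ_t ⟨y_t − y*, Aᵀ x_t⟩, then the average strategies x̄ = (1/T)Σ_t x_t and ȳ = (1/T)Σ_t y_t form an (R/T)-approximate Nash equilibrium: for all x ∈ Δ_{m_x} and y ∈ Δ_{m_y}, xᵀ A ȳ − R/T ≤ x̄ᵀ A ȳ and x̄ᵀ A ȳ ≤ x̄ᵀ A y + R/T. -/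
/-!
Write `⟨u, A v⟩` for the payoff and `S = ∑ₜ ⟨xₜ, A yₜ⟩` for the realised total payoff. Since the
payoff is bilinear, `T ⟨u, A ȳ⟩ = ∑ₜ ⟨u, A yₜ⟩` and `T ⟨x̄, A v⟩ = ∑ₜ ⟨xₜ, A v⟩`, so the two regret
bounds read `T ⟨u, A ȳ⟩ ≤ S + Rx` and `S - Ry ≤ T ⟨x̄, A v⟩` for all mixed strategies `u`, `v`.
Chaining them through `S`, once with `(u, ȳ)` and once with `(x̄, v)` (the averages are mixed
strategies by convexity of the simplex), gives both equilibrium inequalities.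
-/

open Matrix Finset

namespace ZeroSumGame

variable {ι κ τ : Type*} [Fintype ι] [Fintype κ]

theorem sum_sum_mul_mul_eq_dotProduct_mulVec (A : Matrix ι κ ℝ) (u : ι → ℝ) (v : κ → ℝ) :
    ∑ i, ∑ j, u i * A i j * v j = u ⬝ᵥ A *ᵥ v := by
  simp only [dotProduct, mulVec, mul_sum, mul_assoc]

def IsApproxNashEq (A : Matrix ι κ ℝ) (ε : ℝ) (p : ι → ℝ) (q : κ → ℝ) : Prop :=
  ∀ u ∈ stdSimplex ℝ ι, ∀ v ∈ stdSimplex ℝ κ,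
    u ⬝ᵥ A *ᵥ q - ε ≤ p ⬝ᵥ A *ᵥ q ∧ p ⬝ᵥ A *ᵥ q ≤ p ⬝ᵥ A *ᵥ v + ε

theorem average_mem_stdSimplex {s : Finset τ} (hs : s.Nonempty) {x : τ → ι → ℝ}
    (hx : ∀ t ∈ s, x t ∈ stdSimplex ℝ ι) :
    (#s : ℝ)⁻¹ • ∑ t ∈ s, x t ∈ stdSimplex ℝ ι := by
  rw [smul_sum]
  refine (convex_stdSimplex ℝ ι).sum_mem (fun _ _ => by positivity) ?_ hx
  rw [sum_const, nsmul_eq_mul, mul_inv_cancel₀ (by exact_mod_cast hs.card_pos.ne')]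

theorem card_mul_dotProduct_mulVec_average (A : Matrix ι κ ℝ) {s : Finset τ} (hs : s.Nonempty)
    (u : ι → ℝ) (y : τ → κ → ℝ) :
    #s * (u ⬝ᵥ A *ᵥ ((#s : ℝ)⁻¹ • ∑ t ∈ s, y t)) = ∑ t ∈ s, u ⬝ᵥ A *ᵥ y t := by
  rw [mulVec_smul, dotProduct_smul, smul_eq_mul, ← mul_assoc,
    mul_inv_cancel₀ (by exact_mod_cast hs.card_pos.ne'), one_mul, mulVec_sum, dotProduct_sum]

theorem card_mul_average_dotProduct_mulVec (A : Matrix ι κ ℝ) {s : Finset τ} (hs : s.Nonempty)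
    (x : τ → ι → ℝ) (v : κ → ℝ) :
    #s * (((#s : ℝ)⁻¹ • ∑ t ∈ s, x t) ⬝ᵥ A *ᵥ v) = ∑ t ∈ s, x t ⬝ᵥ A *ᵥ v := by
  rw [smul_dotProduct, smul_eq_mul, ← mul_assoc,
    mul_inv_cancel₀ (by exact_mod_cast hs.card_pos.ne'), one_mul, sum_dotProduct]

theorem isApproxNashEq_average_of_regret_le (A : Matrix ι κ ℝ) {s : Finset τ} (hs : s.Nonempty)
    {x : τ → ι → ℝ} {y : τ → κ → ℝ}
    (hx : ∀ t ∈ s, x t ∈ stdSimplex ℝ ι) (hy : ∀ t ∈ s, y t ∈ stdSimplex ℝ κ) {Rx Ry : ℝ}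
    (hRx : ∀ u ∈ stdSimplex ℝ ι, ∑ t ∈ s, (u - x t) ⬝ᵥ A *ᵥ y t ≤ Rx)
    (hRy : ∀ v ∈ stdSimplex ℝ κ, ∑ t ∈ s, (y t - v) ⬝ᵥ Aᵀ *ᵥ x t ≤ Ry) :
    IsApproxNashEq A ((Rx + Ry) / #s)
      ((#s : ℝ)⁻¹ • ∑ t ∈ s, x t) ((#s : ℝ)⁻¹ • ∑ t ∈ s, y t) := by
  set S := ∑ t ∈ s, x t ⬝ᵥ A *ᵥ y t
  have hcard : (0 : ℝ) < #s := by exact_mod_cast hs.card_pos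
  have upper : ∀ u ∈ stdSimplex ℝ ι,
      #s * (u ⬝ᵥ A *ᵥ ((#s : ℝ)⁻¹ • ∑ t ∈ s, y t)) ≤ S + Rx := by
    intro u hu
    have h := hRx u hu
    simp only [sub_dotProduct, sum_sub_distrib] at h
    rw [card_mul_dotProduct_mulVec_average A hs]
    linarith
  have lower : ∀ v ∈ stdSimplex ℝ κ,
      S - Ry ≤ #s * (((#s : ℝ)⁻¹ • ∑ t ∈ s, x t) ⬝ᵥ A *ᵥ v) := by
    intro v hv
    have h := hRy v hv
    simp only [dotProduct_transpose_mulVec, mulVec_sub, dotProduct_sub, sum_sub_distrib] at h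
    rw [card_mul_average_dotProduct_mulVec A hs]
    linarith
  intro u hu v hv
  have hxbar := average_mem_stdSimplex hs hx
  have hybar := average_mem_stdSimplex hs hy
  constructor
  · rw [sub_le_iff_le_add, ← mul_le_mul_iff_right₀ hcard, mul_add, mul_div_cancel₀ _ hcard.ne']
    linarith [upper u hu, lower _ hybar]
  · rw [← mul_le_mul_iff_right₀ hcard, mul_add, mul_div_cancel₀ _ hcard.ne']
    linarith [upper _ hxbar, lower v hv]

end ZeroSumGame

/-- Regret-to-Nash conversion (Freund–Schapire). If the players' external regrets are
bounded by `Rx` and `Ry` respectively, then the average strategies form an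
`((Rx + Ry)/T)`-approximate Nash equilibrium of the zero-sum game with payoff matrix `A`. -/
theorem stmt_9 (T mx my : ℕ) (hT : 0 < T)
    (A : Matrix (Fin mx) (Fin my) ℝ)
    (x : ℕ → Fin mx → ℝ) (y : ℕ → Fin my → ℝ)
    (hx : ∀ t ∈ Finset.Icc 1 T, (∀ i, 0 ≤ x t i) ∧ ∑ i, x t i = 1)
    (hy : ∀ t ∈ Finset.Icc 1 T, (∀ j, 0 ≤ y t j) ∧ ∑ j, y t j = 1)
    (Rx Ry : ℝ)
    (hRx : ∀ xs : Fin mx → ℝ, (∀ i, 0 ≤ xs i) → ∑ i, xs i = 1 →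
      ∑ t ∈ Finset.Icc 1 T, ∑ i, (xs i - x t i) * (∑ j, A i j * y t j) ≤ Rx)
    (hRy : ∀ ys : Fin my → ℝ, (∀ j, 0 ≤ ys j) → ∑ j, ys j = 1 →
      ∑ t ∈ Finset.Icc 1 T, ∑ j, (y t j - ys j) * (∑ i, A i j * x t i) ≤ Ry)
    (xbar : Fin mx → ℝ) (hxbar : ∀ i, xbar i = (∑ t ∈ Finset.Icc 1 T, x t i) / T)
    (ybar : Fin my → ℝ) (hybar : ∀ j, ybar j = (∑ t ∈ Finset.Icc 1 T, y t j) / T) :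
    ∀ xs : Fin mx → ℝ, (∀ i, 0 ≤ xs i) → ∑ i, xs i = 1 →
    ∀ ys : Fin my → ℝ, (∀ j, 0 ≤ ys j) → ∑ j, ys j = 1 →
      (∑ i, ∑ j, xs i * A i j * ybar j) - (Rx + Ry) / T
        ≤ ∑ i, ∑ j, xbar i * A i j * ybar j ∧
      ∑ i, ∑ j, xbar i * A i j * ybar j
        ≤ (∑ i, ∑ j, xbar i * A i j * ys j) + (Rx + Ry) / T := by
  intro xs hxs₁ hxs₂ ys hys₁ hys₂
  have hcard : (#(Icc 1 T) : ℝ) = T := by simp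
  have hxbar' : xbar = (#(Icc 1 T) : ℝ)⁻¹ • ∑ t ∈ Icc 1 T, x t := by
    ext i; simp [hxbar, Finset.sum_apply, div_eq_inv_mul]
  have hybar' : ybar = (#(Icc 1 T) : ℝ)⁻¹ • ∑ t ∈ Icc 1 T, y t := by
    ext j; simp [hybar, Finset.sum_apply, div_eq_inv_mul]
  -- `hRx` and `hRy` are the regret bounds with `⬝ᵥ`, `*ᵥ` and `ᵀ` unfolded, so they apply as they are.
  have hnash := ZeroSumGame.isApproxNashEq_average_of_regret_le A (nonempty_Icc.mpr hT)
    hx hy (fun u hu => hRx u hu.1 hu.2) (fun v hv => hRy v hv.1 hv.2)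
  rw [← hxbar', ← hybar', hcard] at hnash
  simpa only [ZeroSumGame.sum_sum_mul_mul_eq_dotProduct_mulVec] using
    hnash xs ⟨hxs₁, hxs₂⟩ ys ⟨hys₁, hys₂⟩
end

section
/- Fix a player i with action set of size m. Suppose at each round t the player's strategy x_t ∈ Δ_m satisfies (Q_t)ᵀ x_t = x_t where Q_t is the row-stochastic matrix whose a-th row is y_{a,t} ∈ Δ_m, and the a-th expert receives utility vector u_{a,t} = x_t(a)·u_t. Then for every row-stochastic matrix M ∈ [0,1]^{m×m}, the swap regret Σ_{t=1}^T ⟨x_t, M u_t − u_t⟩ equals Σ_{a=1}^m Σ_{t=1}^T ⟨M(a,·) − y_{a,t}, u_{a,t}⟩, i.e., the sum over experts a of the external regret of expert a against comparator M(a,·). -/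
/-! Stationarity of `x` means that the expected utility of the experts' recommendations,
`∑ₐ xₐ ⟨y_a, u⟩`, is the utility `⟨x, u⟩` actually obtained. Subtracting it from the
comparator's utility `∑ₐ xₐ ⟨M(a,·), u⟩` round by round splits the swap regret into the
external regrets of the experts. -/

open Finset

section

variable {ι R : Type*} [Fintype ι] [CommRing R]

theorem sum_sum_mul_mul_eq_of_stationary {x u : ι → R} {y : ι → ι → R}
    (hy : ∀ b, ∑ a, y a b * x a = x b) :
    ∑ a, ∑ b, y a b * (x a * u b) = ∑ b, x b * u b := by
  rw [sum_comm]
  refine sum_congr rfl fun b _ => ?_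
  rw [← hy b, sum_mul]
  exact sum_congr rfl fun a _ => by ring

theorem swapRegret_eq_sum_externalRegret_of_stationary {x u : ι → R} {y : ι → ι → R}
    (hy : ∀ b, ∑ a, y a b * x a = x b) (M : ι → ι → R) :
    ∑ a, x a * ((∑ b, M a b * u b) - u a)
      = ∑ a, ∑ b, (M a b - y a b) * (x a * u b) := by
  simp only [sub_mul, sum_sub_distrib, sum_sum_mul_mul_eq_of_stationary hy, mul_sub, mul_sum]
  congr 1
  exact sum_congr rfl fun a _ => sum_congr rfl fun b _ => by ring

end

theorem stmt_10_general (T m : ℕ)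
    (x : ℕ → Fin m → ℝ) (y : Fin m → ℕ → Fin m → ℝ) (u : ℕ → Fin m → ℝ)
    (hstationary : ∀ t ∈ Finset.Icc 1 T, ∀ b, ∑ a, y a t b * x t a = x t b)
    (M : Fin m → Fin m → ℝ) :
    ∑ t ∈ Finset.Icc 1 T, ∑ a, x t a * ((∑ b, M a b * u t b) - u t a)
      = ∑ a, ∑ t ∈ Finset.Icc 1 T, ∑ b, (M a b - y a t b) * (x t a * u t b) := by
  rw [sum_comm (s := univ)]
  exact sum_congr rfl fun t ht =>
    swapRegret_eq_sum_externalRegret_of_stationary (y := fun a => y a t) (hstationary t ht) M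

/-- Blum–Mansour reduction identity: if at each round `x t` is a stationary distribution of
the row-stochastic matrix whose `a`-th row is `y a t`, and expert `a` receives the utility
vector `u_{a,t} = x t a • u t`, then the swap regret against any row-stochastic `M` equals
the sum over experts of their external regrets against the rows of `M`. -/
theorem stmt_10 (T m : ℕ)
    (x : ℕ → Fin m → ℝ) (y : Fin m → ℕ → Fin m → ℝ) (u : ℕ → Fin m → ℝ)
    (hxsimplex : ∀ t ∈ Finset.Icc 1 T, (∀ a, 0 ≤ x t a) ∧ ∑ a, x t a = 1)
    (hysimplex : ∀ a, ∀ t ∈ Finset.Icc 1 T, (∀ b, 0 ≤ y a t b) ∧ ∑ b, y a t b = 1)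
    (hstationary : ∀ t ∈ Finset.Icc 1 T, ∀ b, ∑ a, y a t b * x t a = x t b)
    (M : Fin m → Fin m → ℝ)
    (hM : ∀ a, (∀ b, 0 ≤ M a b) ∧ ∑ b, M a b = 1) :
    ∑ t ∈ Finset.Icc 1 T, ∑ a, x t a * ((∑ b, M a b * u t b) - u t a)
      = ∑ a, ∑ t ∈ Finset.Icc 1 T, ∑ b, (M a b - y a t b) * (x t a * u t b) :=
  stmt_10_general T m x y u hstationary M
end

section
/- Let u_i : A_1 × ⋯ × A_n → [−U, U] be utility functions with each A_i finite. Suppose at each round t each player i plays x_{i,t} ∈ Δ(A_i), and let u_{i,t}(a_i) = E_{a_{−i} ∼ x_{−i,t}}[u_i(a_i, a_{−i})] be the expected utility vector. Let σ_t be the product distribution of (x_{1,t},…,x_{n,t}) on the joint action space and σ = (1/T) Σ_t σ_t. If for every player i the swap regret max_M Σ_t ⟨x_{i,t}, M u_{i,t} − u_{i,t}⟩ (maximum over row-stochastic M) is at most R, then σ is an (R/T)-approximate correlated equilibrium: for every player i and every function φ_i : A_i → A_i, E_{a∼σ}[u_i(a)] ≥ E_{a∼σ}[u_i(φ_i(a_i),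 a_{−i})] − R/T. -/
lemma slice_sum {n : ℕ} {m : Fin n → ℕ} (i : Fin n) (c d : Fin (m i))
    (F : ((j : Fin n) → Fin (m j)) → ℝ) :
    ∑ a : (j : Fin n) → Fin (m j), (if a i = c then F (Function.update a i d) else 0)
      = ∑ a : (j : Fin n) → Fin (m j), (if a i = d then F a else 0) := by
  rw [← Finset.sum_filter, ← Finset.sum_filter]
  refine Finset.sum_nbij' (fun a => Function.update a i d) (fun a => Function.update a i c)
    ?_ ?_ ?_ ?_ ?_
  · intro a ha; simp
  · intro a ha; simp
  · intro a ha
    simp only [Finset.mem_filter, Finset.mem_univ, true_and] at ha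
    show Function.update (Function.update a i d) i c = a
    rw [Function.update_idem, ← ha, Function.update_eq_self]
  · intro a ha
    simp only [Finset.mem_filter, Finset.mem_univ, true_and] at ha
    show Function.update (Function.update a i c) i d = a
    rw [Function.update_idem, ← ha, Function.update_eq_self]
  · intro a ha; rfl

/-- Swap-regret docstring placeholder -/
theorem stmt_11 (n T : ℕ) (hT : 0 < T) (m : Fin n → ℕ)
    (U : ℝ)
    (u : (i : Fin n) → ((j : Fin n) → Fin (m j)) → ℝ)
    (hu : ∀ i a, |u i a| ≤ U)
    (x : (i : Fin n) → ℕ → Fin (m i) → ℝ)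
    (hx : ∀ i, ∀ t ∈ Finset.Icc 1 T, (∀ ai, 0 ≤ x i t ai) ∧ ∑ ai, x i t ai = 1)
    (uvec : (i : Fin n) → ℕ → Fin (m i) → ℝ)
    (huvec : ∀ i t ai, uvec i t ai =
      ∑ a : (j : Fin n) → Fin (m j),
        if a i = ai then (∏ j ∈ Finset.univ.erase i, x j t (a j)) * u i a else 0)
    (σbar : ((j : Fin n) → Fin (m j)) → ℝ)
    (hσbar : ∀ a, σbar a = (∑ t ∈ Finset.Icc 1 T, ∏ j, x j t (a j)) / T)
    (R : ℝ)
    (hR : ∀ i, ∀ M : Fin (m i) → Fin (m i) → ℝ,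
      (∀ ai, (∀ b, 0 ≤ M ai b) ∧ ∑ b, M ai b = 1) →
      ∑ t ∈ Finset.Icc 1 T, ∑ ai, x i t ai * ((∑ b, M ai b * uvec i t b) - uvec i t ai)
        ≤ R) :
    ∀ i, ∀ φ : Fin (m i) → Fin (m i),
      ∑ a : (j : Fin n) → Fin (m j), σbar a * u i a
        ≥ (∑ a : (j : Fin n) → Fin (m j), σbar a * u i (Function.update a i (φ (a i))))
          - R / T := by
  intro i φ
  set w : ℕ → ((j : Fin n) → Fin (m j)) → ℝ :=
    fun t a => ∏ j ∈ Finset.univ.erase i, x j t (a j) with hw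
  have hsplit : ∀ t (a : (j : Fin n) → Fin (m j)),
      (∏ j, x j t (a j)) = x i t (a i) * w t a :=
    fun t a => (Finset.mul_prod_erase Finset.univ (fun j => x j t (a j))
      (Finset.mem_univ i)).symm
  have hwupd : ∀ t c (a : (j : Fin n) → Fin (m j)),
      w t (Function.update a i c) = w t a := by
    intro t c a
    refine Finset.prod_congr rfl fun j hj => ?_
    rw [Function.update_of_ne (Finset.ne_of_mem_erase hj)]
  have hA : ∀ t, ∑ a : (j : Fin n) → Fin (m j), (∏ j, x j t (a j)) * u i a
      = ∑ ai, x i t ai * uvec i t ai := by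
    intro t
    have h1 : ∑ ai, x i t ai * uvec i t ai
        = ∑ ai, ∑ a : (j : Fin n) → Fin (m j),
            if a i = ai then x i t ai * (w t a * u i a) else 0 := by
      refine Finset.sum_congr rfl fun ai _ => ?_
      rw [huvec i t ai, Finset.mul_sum]
      exact Finset.sum_congr rfl fun a _ => by rw [mul_ite, mul_zero]
    rw [h1, Finset.sum_comm]
    refine Finset.sum_congr rfl fun a _ => ?_
    rw [hsplit t a, Finset.sum_ite_eq, if_pos (Finset.mem_univ _), mul_assoc]
  have hB : ∀ t, ∑ a : (j : Fin n) → Fin (m j),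
        (∏ j, x j t (a j)) * u i (Function.update a i (φ (a i)))
      = ∑ ai, x i t ai * uvec i t (φ ai) := by
    intro t
    have hslice : ∀ ai : Fin (m i),
        ∑ a : (j : Fin n) → Fin (m j),
            (if a i = ai then w t a * u i (Function.update a i (φ ai)) else 0)
          = uvec i t (φ ai) := by
      intro ai
      rw [huvec, ← slice_sum i ai (φ ai) (fun a => w t a * u i a)]
      refine Finset.sum_congr rfl fun a _ => ?_
      by_cases h : a i = ai <;> simp [h, hwupd]
    have h1 : ∑ ai, x i t ai * uvec i t (φ ai)
        = ∑ ai, ∑ a : (j : Fin n) → Fin (m j),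
            if a i = ai then x i t ai * (w t a * u i (Function.update a i (φ ai))) else 0 := by
      refine Finset.sum_congr rfl fun ai _ => ?_
      rw [← hslice ai, Finset.mul_sum]
      exact Finset.sum_congr rfl fun a _ => by rw [mul_ite, mul_zero]
    rw [h1, Finset.sum_comm]
    refine Finset.sum_congr rfl fun a _ => ?_
    rw [hsplit t a, Finset.sum_ite_eq, if_pos (Finset.mem_univ _), mul_assoc]
  have hM : ∀ ai, (∀ b, (0:ℝ) ≤ if b = φ ai then 1 else 0) ∧
      ∑ b, (if b = φ ai then (1:ℝ) else 0) = 1 := by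
    intro ai
    constructor
    · intro b; split <;> norm_num
    · simp
  have hreg := hR i (fun ai b => if b = φ ai then (1:ℝ) else 0) hM
  simp only [ite_mul, one_mul, zero_mul, Finset.sum_ite_eq', Finset.mem_univ,
    if_true] at hreg
  simp only [mul_sub, Finset.sum_sub_distrib] at hreg
  have hσ1 : ∑ a : (j : Fin n) → Fin (m j), σbar a * u i a
      = (∑ t ∈ Finset.Icc 1 T, ∑ ai, x i t ai * uvec i t ai) / T := by
    calc ∑ a : (j : Fin n) → Fin (m j), σbar a * u i a
        = ∑ a : (j : Fin n) → Fin (m j),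
            (∑ t ∈ Finset.Icc 1 T, (∏ j, x j t (a j)) * u i a) / T := by
          refine Finset.sum_congr rfl fun a _ => ?_
          rw [hσbar, div_mul_eq_mul_div, Finset.sum_mul]
      _ = (∑ t ∈ Finset.Icc 1 T, ∑ a : (j : Fin n) → Fin (m j),
            (∏ j, x j t (a j)) * u i a) / T := by
          rw [← Finset.sum_div, Finset.sum_comm]
      _ = _ := by rw [Finset.sum_congr rfl fun t _ => hA t]
  have hσ2 : ∑ a : (j : Fin n) → Fin (m j), σbar a * u i (Function.update a i (φ (a i)))
      = (∑ t ∈ Finset.Icc 1 T, ∑ ai, x i t ai * uvec i t (φ ai)) / T := by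
    calc ∑ a : (j : Fin n) → Fin (m j), σbar a * u i (Function.update a i (φ (a i)))
        = ∑ a : (j : Fin n) → Fin (m j),
            (∑ t ∈ Finset.Icc 1 T, (∏ j, x j t (a j)) * u i (Function.update a i (φ (a i)))) / T := by
          refine Finset.sum_congr rfl fun a _ => ?_
          rw [hσbar, div_mul_eq_mul_div, Finset.sum_mul]
      _ = (∑ t ∈ Finset.Icc 1 T, ∑ a : (j : Fin n) → Fin (m j),
            (∏ j, x j t (a j)) * u i (Function.update a i (φ (a i)))) / T := by
          rw [← Finset.sum_div, Finset.sum_comm]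
      _ = _ := by rw [Finset.sum_congr rfl fun t _ => hB t]
  have hT' : (0:ℝ) < T := by exact_mod_cast hT
  rw [hσ1, hσ2, ge_iff_le, div_sub_div_same, div_le_div_iff₀ hT' hT']
  nlinarith [hreg, hT'.le]
end

section
/- Let T be a time horizon and let (S_t)_{t=1}^{T+1} be a nondecreasing sequence of nonnegative reals with S_1 = 0 and increments δ_t = S_{t+1} − S_t ≥ 0, so that S_{T+1} = Σ_{t=1}^T δ_t. Suppose there exists τ ∈ [T] with S_{τ+1} ≥ S_{T+1}/2, and take τ minimal. Then Σ_{t=1}^T √(S_{t+1})·δ_t ≥ (S_{T+1})^{3/2}/3. -/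
/-- Stopping-time lower bound: for a nondecreasing nonnegative sequence `S` with `S 1 = 0`,
if there is a (minimal) `τ ∈ [T]` with `S (τ+1) ≥ S (T+1) / 2`, then
`Σ_{t=1}^T √(S (t+1)) (S (t+1) - S t) ≥ (S (T+1))^{3/2} / 3`. -/
theorem stmt_16 (T : ℕ) (hT : 1 ≤ T) (S : ℕ → ℝ)
    (hS1 : S 1 = 0)
    (hmono : ∀ t, 1 ≤ t → t ≤ T → S t ≤ S (t + 1))
    (τ : ℕ)
    (hτ : IsLeast {t | t ∈ Finset.Icc 1 T ∧ S (t + 1) ≥ S (T + 1) / 2} τ) :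
    ∑ t ∈ Finset.Icc 1 T, Real.sqrt (S (t + 1)) * (S (t + 1) - S t)
      ≥ S (T + 1) * Real.sqrt (S (T + 1)) / 3 := by
  obtain ⟨⟨hτmem, hτhalf⟩, hmin⟩ := hτ
  simp only [Finset.mem_Icc] at hτmem
  obtain ⟨hτ1, hτT⟩ := hτmem
  set A := S (T + 1) with hA
  -- monotonicity on [1, T+1]
  have hm : ∀ s t, 1 ≤ s → s ≤ t → t ≤ T + 1 → S s ≤ S t := by
    intro s t hs hst htT
    induction t with
    | zero => omega
    | succ n ih =>
      rcases Nat.lt_or_ge s (n + 1) with h | h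
      · have hn : 1 ≤ n := by omega
        have := hmono n hn (by omega)
        exact le_trans (ih (by omega) (by omega)) this
      · have : s = n + 1 := by omega
        simp [this]
  have hA0 : 0 ≤ A := by
    rw [hA, ← hS1]
    exact hm 1 (T + 1) le_rfl (by omega) le_rfl
  -- S τ ≤ A / 2
  have hSτ : S τ ≤ A / 2 := by
    rcases Nat.eq_or_lt_of_le hτ1 with h | h
    · rw [← h, hS1]; linarith
    · by_contra hc
      push_neg at hc
      have hmem : τ - 1 ∈ {t | t ∈ Finset.Icc 1 T ∧ S (t + 1) ≥ A / 2} := by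
        constructor
        · simp only [Finset.mem_Icc]; omega
        · have : τ - 1 + 1 = τ := by omega
          rw [this]; linarith
      have := hmin hmem
      omega
  -- each term nonneg
  have hterm : ∀ t ∈ Finset.Icc 1 T, 0 ≤ Real.sqrt (S (t + 1)) * (S (t + 1) - S t) := by
    intro t ht
    simp only [Finset.mem_Icc] at ht
    exact mul_nonneg (Real.sqrt_nonneg _) (by linarith [hmono t ht.1 ht.2])
  -- restrict sum to Icc τ T
  have hsub : Finset.Icc τ T ⊆ Finset.Icc 1 T := by
    intro x hx; simp only [Finset.mem_Icc] at *; omega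
  have hstep1 : ∑ t ∈ Finset.Icc τ T, Real.sqrt (S (t + 1)) * (S (t + 1) - S t)
      ≤ ∑ t ∈ Finset.Icc 1 T, Real.sqrt (S (t + 1)) * (S (t + 1) - S t) :=
    Finset.sum_le_sum_of_subset_of_nonneg hsub (fun t ht _ => hterm t ht)
  -- lower bound on tail sum
  have hstep2 : Real.sqrt (A / 2) * (A - S τ)
      ≤ ∑ t ∈ Finset.Icc τ T, Real.sqrt (S (t + 1)) * (S (t + 1) - S t) := by
    have htel : ∀ n, τ ≤ n → ∑ t ∈ Finset.Icc τ n, (S (t + 1) - S t) = S (n + 1) - S τ := by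
      intro n hn
      induction n with
      | zero => omega
      | succ k ih =>
        rcases Nat.eq_or_lt_of_le hn with h | h
        · rw [← h, Finset.Icc_self, Finset.sum_singleton]
        · rw [Finset.sum_Icc_succ_top (by omega), ih (by omega)]
          ring
    have htel := htel T hτT
    rw [← htel, Finset.mul_sum]
    apply Finset.sum_le_sum
    intro t ht
    simp only [Finset.mem_Icc] at ht
    have hδ : 0 ≤ S (t + 1) - S t := by linarith [hmono t (by omega) ht.2]
    have hSt : A / 2 ≤ S (t + 1) := by
      have := hm (τ + 1) (t + 1) (by omega) (by omega) (by omega)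
      linarith
    exact mul_le_mul_of_nonneg_right (Real.sqrt_le_sqrt hSt) hδ
  -- final numeric bound
  have hfin : A * Real.sqrt A / 3 ≤ Real.sqrt (A / 2) * (A - S τ) := by
    have h1 : A * Real.sqrt A / 3 ≤ Real.sqrt (A / 2) * (A / 2) := by
      have hx := Real.sq_sqrt (by linarith : (0:ℝ) ≤ A / 2)
      have hy := Real.sq_sqrt hA0
      have hxn := Real.sqrt_nonneg (A / 2)
      have hyn := Real.sqrt_nonneg A
      nlinarith [sq_nonneg (3 * Real.sqrt (A / 2) - 2 * Real.sqrt A),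
        mul_nonneg hxn hyn, mul_nonneg (mul_nonneg hxn hxn) hyn,
        mul_nonneg (mul_nonneg hxn hyn) hyn,
        sq_nonneg (Real.sqrt (A / 2) - Real.sqrt A),
        mul_nonneg hxn (sq_nonneg (3 * Real.sqrt (A / 2) - 2 * Real.sqrt A))]
    have h2 : Real.sqrt (A / 2) * (A / 2) ≤ Real.sqrt (A / 2) * (A - S τ) :=
      mul_le_mul_of_nonneg_left (by linarith) (Real.sqrt_nonneg _)
    linarith
  linarith
end
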